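/- arXiv:1607.08269 — 7 statements merged into one kernel-verified Lean document; each statement's English description precedes it below -/
import Mathlib

section
/- The functions E₂ := −(1/2)·F₁ and E₄ := (1/4)·F₁² − (1/2)·F₃ satisfy E₂′(ξ) = F₂(ξ) and E₄′(ξ) = F₄(ξ) for every ξ ∈ I. (That is, up to an additive constant, the even Liouville–Green coefficients E₂ and E₄ are given explicitly in terms of the odd coefficient functions F₁ and F₃, without integration.) -/
/-- With `φ` smooth on an open interval `I` and `F s` the
Liouville–Green coefficient functions (`F 1 = φ/2`, `F 2 = -φ'/4`,
`F (s+1) = -(F s)'/2 - (1/2) ∑_{j=1}^{s-1} F j · F (s-j)` for `s ≥ 2`),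
the functions `E₂ := -(1/2)·F 1` and `E₄ := (1/4)·(F 1)² - (1/2)·F 3`
satisfy `E₂' = F 2` and `E₄' = F 4` on `I`. -/
theorem stmt0
    (a b : ℝ) (I : Set ℝ) (hI : I = Set.Ioo a b)
    (φ : ℝ → ℝ) (hφ : ContDiffOn ℝ (⊤ : ℕ∞) φ I)
    (F : ℕ → ℝ → ℝ)
    (hF1 : ∀ ξ ∈ I, F 1 ξ = (1/2) * φ ξ)
    (hF2 : ∀ ξ ∈ I, F 2 ξ = -(1/4) * deriv φ ξ)
    (hFrec : ∀ s, 2 ≤ s → ∀ ξ ∈ I,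
      F (s+1) ξ = -(1/2) * deriv (F s) ξ
        - (1/2) * ∑ j ∈ Finset.Icc 1 (s-1), F j ξ * F (s-j) ξ) :
    ∀ ξ ∈ I,
      deriv (fun x => -(1/2) * F 1 x) ξ = F 2 ξ ∧
      deriv (fun x => (1/4) * (F 1 x)^2 - (1/2) * F 3 x) ξ = F 4 ξ := by
  have hIopen : IsOpen I := hI ▸ isOpen_Ioo
  have hφ1 : ContDiffOn ℝ (⊤ : ℕ∞) (deriv φ) I := hφ.deriv_of_isOpen hIopen (by simp)
  have hφ2 : ContDiffOn ℝ (⊤ : ℕ∞) (deriv (deriv φ)) I := hφ1.deriv_of_isOpen hIopen (by simp)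
  have hd0 : ∀ ζ ∈ I, DifferentiableAt ℝ φ ζ := fun ζ hζ =>
    (hφ.contDiffAt (hIopen.mem_nhds hζ)).differentiableAt (by simp)
  have hd1 : ∀ ζ ∈ I, DifferentiableAt ℝ (deriv φ) ζ := fun ζ hζ =>
    (hφ1.contDiffAt (hIopen.mem_nhds hζ)).differentiableAt (by simp)
  have hd2 : ∀ ζ ∈ I, DifferentiableAt ℝ (deriv (deriv φ)) ζ := fun ζ hζ =>
    (hφ2.contDiffAt (hIopen.mem_nhds hζ)).differentiableAt (by simp)
  -- explicit formula for F 3 on I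
  have hF3 : ∀ ζ ∈ I, F 3 ζ = (1/8) * deriv (deriv φ) ζ - (1/8) * (φ ζ)^2 := by
    intro ζ hζ
    have hrec := hFrec 2 (by norm_num) ζ hζ
    have hsum : ∑ j ∈ Finset.Icc 1 (2-1), F j ζ * F (2-j) ζ = F 1 ζ * F 1 ζ := by
      norm_num
    have hderiv2 : deriv (F 2) ζ = -(1/4) * deriv (deriv φ) ζ := by
      have heq : F 2 =ᶠ[nhds ζ] fun x => -(1/4) * deriv φ x :=
        Filter.eventuallyEq_of_mem (hIopen.mem_nhds hζ) hF2
      rw [heq.deriv_eq, ((hd1 ζ hζ).hasDerivAt.const_mul (-(1/4) : ℝ)).deriv]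
    rw [hrec, hsum, hderiv2, hF1 ζ hζ]
    ring
  intro ξ hξ
  have hmem : I ∈ nhds ξ := hIopen.mem_nhds hξ
  constructor
  · have heq : (fun x => -(1/2) * F 1 x) =ᶠ[nhds ξ] fun x => -(1/4) * φ x :=
      Filter.eventuallyEq_of_mem hmem fun x hx => by rw [hF1 x hx]; ring
    rw [heq.deriv_eq, ((hd0 ξ hξ).hasDerivAt.const_mul (-(1/4) : ℝ)).deriv,
      hF2 ξ hξ]
  · have heq : (fun x => (1/4) * (F 1 x)^2 - (1/2) * F 3 x) =ᶠ[nhds ξ]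
        fun x => (1/8) * (φ x)^2 - (1/16) * deriv (deriv φ) x :=
      Filter.eventuallyEq_of_mem hmem fun x hx => by
        rw [hF1 x hx, hF3 x hx]; ring
    have hD : HasDerivAt (fun x => (1/8) * (φ x)^2 - (1/16) * deriv (deriv φ) x)
        ((1/8) * (2 * φ ξ ^ 1 * deriv φ ξ) - (1/16) * deriv (deriv (deriv φ)) ξ) ξ :=
      (((hd0 ξ hξ).hasDerivAt.pow 2).const_mul (1/8 : ℝ)).sub
        (((hd2 ξ hξ).hasDerivAt).const_mul (1/16 : ℝ))
    have hderiv3 : deriv (F 3) ξ =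
        (1/8) * deriv (deriv (deriv φ)) ξ - (1/4) * (φ ξ * deriv φ ξ) := by
      have heq3 : F 3 =ᶠ[nhds ξ] fun x => (1/8) * deriv (deriv φ) x - (1/8) * (φ x)^2 :=
        Filter.eventuallyEq_of_mem hmem hF3
      have hD3 : HasDerivAt (fun x => (1/8) * deriv (deriv φ) x - (1/8) * (φ x)^2)
          ((1/8) * deriv (deriv (deriv φ)) ξ - (1/8) * (2 * φ ξ ^ 1 * deriv φ ξ)) ξ :=
        (((hd2 ξ hξ).hasDerivAt).const_mul (1/8 : ℝ)).sub
          (((hd0 ξ hξ).hasDerivAt.pow 2).const_mul (1/8 : ℝ))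
      rw [heq3.deriv_eq, hD3.deriv]; ring
    have hrec := hFrec 3 (by norm_num) ξ hξ
    have hsum : ∑ j ∈ Finset.Icc 1 (3-1), F j ξ * F (3-j) ξ
        = F 1 ξ * F 2 ξ + F 2 ξ * F 1 ξ := by
      show ∑ j ∈ Finset.Icc 1 2, F j ξ * F (3-j) ξ = _
      rw [show Finset.Icc 1 2 = {1, 2} by decide]
      simp
    rw [heq.deriv_eq, hD.deriv, hrec, hsum, hderiv3, hF1 ξ hξ, hF2 ξ hξ]
    ring
end

section
/- For every s ≥ 1 there exists a polynomial Q_s ∈ ℝ[X] of degree at most s such that F̂_s(z) = z²·Q_s(z²)/(1−z²)^{3(s+1)/2} for all z ∈ (0,1), where (1−z²)^{3(s+1)/2} denotes the real power of the positive number 1−z². -/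
/-!
Induction on `s`. If `F s z = z² Q(z²) / (1 - z²)^a` with `a = 3(s+1)/2`, then
`z / (2√(1 - z²)) · (F s)'(z)` has the same shape with exponent `a + 3/2` and polynomial
`(Q + X Q')(1 - X) + a X Q`, of degree one higher; and `F j · F (s-j)` has the same shape with
polynomial `X Q_j Q_{s-j}` and exponent `3(j+1)/2 + 3(s-j+1)/2 = a + 3/2`.
-/

open Polynomial Real Set

noncomputable def lgForm (Q : ℝ[X]) (a z : ℝ) : ℝ :=
  z ^ 2 * Q.eval (z ^ 2) / (1 - z ^ 2) ^ a

noncomputable def lgExponent (s : ℕ) : ℝ := 3 * ((s : ℝ) + 1) / 2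

def IsLGCoeff (f : ℝ → ℝ) (s : ℕ) : Prop :=
  ∃ Q : ℝ[X], Q.natDegree ≤ s ∧ ∀ z ∈ Ioo (0 : ℝ) 1, f z = lgForm Q (lgExponent s) z

noncomputable def lgDerivPoly (Q : ℝ[X]) (a : ℝ) : ℝ[X] :=
  (Q + X * derivative Q) * (1 - X) + C a * (X * Q)

theorem lgExponent_succ (s : ℕ) : lgExponent (s + 1) = lgExponent s + 3 / 2 := by
  simp only [lgExponent]; push_cast; ring

theorem lgExponent_add_lgExponent (i j : ℕ) :
    lgExponent i + lgExponent j = lgExponent (i + j) + 3 / 2 := by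
  simp only [lgExponent]; push_cast; ring

theorem lgForm_sub (P Q : ℝ[X]) (a z : ℝ) :
    lgForm (P - Q) a z = lgForm P a z - lgForm Q a z := by
  simp only [lgForm, eval_sub]; ring

theorem lgForm_C_mul (c : ℝ) (Q : ℝ[X]) (a z : ℝ) :
    lgForm (C c * Q) a z = c * lgForm Q a z := by
  simp only [lgForm, eval_mul, eval_C]; ring

theorem lgForm_sum {ι : Type*} (s : Finset ι) (Q : ι → ℝ[X]) (a z : ℝ) :
    lgForm (∑ i ∈ s, Q i) a z = ∑ i ∈ s, lgForm (Q i) a z := by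
  simp only [lgForm, eval_finsetSum, Finset.mul_sum, Finset.sum_div]

theorem lgForm_mul_lgForm (P Q : ℝ[X]) (a b : ℝ) {z : ℝ} (hu : 0 < 1 - z ^ 2) :
    lgForm P a z * lgForm Q b z = lgForm (X * (P * Q)) (a + b) z := by
  simp only [lgForm, eval_mul, eval_X, rpow_add hu]
  field_simp

theorem natDegree_lgDerivPoly_le {Q : ℝ[X]} {n : ℕ} (hQ : Q.natDegree ≤ n) (a : ℝ) :
    (lgDerivPoly Q a).natDegree ≤ n + 1 := by
  have hXQ : (X * Q).natDegree ≤ n + 1 :=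
    (natDegree_mul_le_of_le natDegree_X_le hQ).trans_eq (add_comm 1 n)
  have hXQ' : (X * derivative Q).natDegree ≤ Q.natDegree := by
    rcases eq_or_ne Q.natDegree 0 with h | h
    · simp [derivative_of_natDegree_zero h]
    · have := natDegree_derivative_lt h
      exact (natDegree_mul_le_of_le natDegree_X_le le_rfl).trans (by omega)
  have h1X : (1 - X : ℝ[X]).natDegree ≤ 1 := (natDegree_sub_le _ _).trans (by simp)
  exact natDegree_add_le_of_degree_le
    (natDegree_mul_le_of_le (natDegree_add_le_of_degree_le hQ (hXQ'.trans hQ)) h1X)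
    ((natDegree_C_mul_le _ _).trans hXQ)

theorem hasDerivAt_lgForm (Q : ℝ[X]) (a : ℝ) {z : ℝ} (hu : 0 < 1 - z ^ 2) :
    HasDerivAt (lgForm Q a)
      (((2 * z * Q.eval (z ^ 2) + z ^ 2 * ((derivative Q).eval (z ^ 2) * (2 * z))) * (1 - z ^ 2) ^ a
        - z ^ 2 * Q.eval (z ^ 2) * ((0 - 2 * z) * a * (1 - z ^ 2) ^ (a - 1)))
        / ((1 - z ^ 2) ^ a) ^ 2) z := by
  have hsq : HasDerivAt (fun z : ℝ => z ^ 2) (2 * z) z := by simpa using hasDerivAt_pow 2 z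
  have hQ := (Q.hasDerivAt (z ^ 2)).comp z hsq
  have hden := ((hasDerivAt_const z (1 : ℝ)).sub hsq).rpow_const (p := a) (Or.inl hu.ne')
  exact (hsq.mul hQ).div hden (rpow_pos_of_pos hu a).ne'

theorem div_sqrt_mul_deriv_lgForm (Q : ℝ[X]) (a : ℝ) {z : ℝ} (hu : 0 < 1 - z ^ 2) :
    z / (2 * √(1 - z ^ 2)) * deriv (lgForm Q a) z = lgForm (lgDerivPoly Q a) (a + 3 / 2) z := by
  rw [(hasDerivAt_lgForm Q a hu).deriv]
  have hsqrt : 0 < √(1 - z ^ 2) := sqrt_pos.2 hu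
  have hpow : 0 < (1 - z ^ 2) ^ a := rpow_pos_of_pos hu a
  have hsub : (1 - z ^ 2) ^ (a - 1) = (1 - z ^ 2) ^ a / (1 - z ^ 2) := rpow_sub_one hu.ne' a
  have hadd : (1 - z ^ 2) ^ (a + 3 / 2) = (1 - z ^ 2) ^ a * (1 - z ^ 2) * √(1 - z ^ 2) := by
    rw [show a + 3 / 2 = a + 1 + 1 / 2 by ring, rpow_add hu, rpow_add hu, rpow_one, sqrt_eq_rpow]
  simp only [lgForm, lgDerivPoly, eval_add, eval_sub, eval_mul, eval_X, eval_C, eval_one, hsub, hadd]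
  field_simp
  ring

theorem isLGCoeff_one {f : ℝ → ℝ}
    (hf : ∀ z ∈ Ioo (0 : ℝ) 1, f z = z ^ 2 * (z ^ 2 + 4) / (8 * (z ^ 2 - 1) ^ 3)) :
    IsLGCoeff f 1 := by
  refine ⟨C (-1 / 8) * (X + C 4), ?_, fun z hz => ?_⟩
  · exact (natDegree_C_mul_le _ _).trans ((natDegree_add_le _ _).trans (by simp))
  · have hu : 0 < 1 - z ^ 2 := by nlinarith [hz.1, hz.2]
    have hexp : lgExponent 1 = ((3 : ℕ) : ℝ) := by norm_num [lgExponent]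
    rw [hf z hz, lgForm, hexp, rpow_natCast]
    have : (z ^ 2 - 1) ^ 3 = -(1 - z ^ 2) ^ 3 := by ring
    simp only [eval_mul, eval_add, eval_C, eval_X, this]
    field_simp

theorem isLGCoeff_succ (F : ℕ → ℝ → ℝ) {s : ℕ} (hs : 1 ≤ s)
    (hF : ∀ j ∈ Finset.Icc 1 s, IsLGCoeff (F j) j)
    (hrec : ∀ z ∈ Ioo (0 : ℝ) 1, F (s + 1) z = z / (2 * √(1 - z ^ 2)) * deriv (F s) z
        - (1 / 2) * ∑ j ∈ Finset.Icc 1 (s - 1), F j z * F (s - j) z) :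
    IsLGCoeff (F (s + 1)) (s + 1) := by
  choose! G hGdeg hG using hF
  have hs' : s ∈ Finset.Icc 1 s := Finset.mem_Icc.2 ⟨hs, le_rfl⟩
  have hpair : ∀ j ∈ Finset.Icc 1 (s - 1),
      j ∈ Finset.Icc 1 s ∧ s - j ∈ Finset.Icc 1 s ∧ j + (s - j) = s := by
    intro j hj
    simp only [Finset.mem_Icc] at hj ⊢
    omega
  refine ⟨lgDerivPoly (G s) (lgExponent s)
      - C (1 / 2) * ∑ j ∈ Finset.Icc 1 (s - 1), X * (G j * G (s - j)), ?_, fun z hz => ?_⟩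
  · refine (natDegree_sub_le_of_le (natDegree_lgDerivPoly_le (hGdeg s hs') _)
      ((natDegree_C_mul_le _ _).trans
        (natDegree_sum_le_of_forall_le _ _ (n := s + 1) fun j hj => ?_))).trans_eq (max_self _)
    obtain ⟨hj, hsj, hsum⟩ := hpair j hj
    have := natDegree_mul_le_of_le natDegree_X_le
      (natDegree_mul_le_of_le (hGdeg j hj) (hGdeg (s - j) hsj))
    omega
  · have hu : 0 < 1 - z ^ 2 := by nlinarith [hz.1, hz.2]
    have hderiv : deriv (F s) z = deriv (lgForm (G s) (lgExponent s)) z :=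
      (Filter.eventuallyEq_of_mem (isOpen_Ioo.mem_nhds hz) (hG s hs')).deriv_eq
    have hprod : ∀ j ∈ Finset.Icc 1 (s - 1), F j z * F (s - j) z
        = lgForm (X * (G j * G (s - j))) (lgExponent (s + 1)) z := by
      intro j hj
      obtain ⟨hj, hsj, hsum⟩ := hpair j hj
      rw [hG j hj z hz, hG (s - j) hsj z hz, lgForm_mul_lgForm _ _ _ _ hu,
        lgExponent_add_lgExponent, hsum, lgExponent_succ]
    rw [hrec z hz, hderiv, div_sqrt_mul_deriv_lgForm _ _ hu, Finset.sum_congr rfl hprod,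
      ← lgForm_sum, ← lgExponent_succ, lgForm_sub, lgForm_C_mul]

/-- For the Liouville–Green coefficient functions `F s` of
Bessel's equation on `(0,1)`, defined by `F 1 z = z²(z²+4)/(8(z²-1)³)` and
`F (s+1) z = (z/(2√(1-z²)))·(F s)'(z) - (1/2) ∑_{j=1}^{s-1} F j z · F (s-j) z`,
for every `s ≥ 1` there is a polynomial `Q` of degree at most `s` with
`F s z = z²·Q(z²)/(1-z²)^{3(s+1)/2}` on `(0,1)`. -/
theorem stmt3
    (F : ℕ → ℝ → ℝ)
    (hF1 : ∀ z ∈ Set.Ioo (0:ℝ) 1, F 1 z = z^2 * (z^2 + 4) / (8 * (z^2 - 1)^3))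
    (hFrec : ∀ s, 1 ≤ s → ∀ z ∈ Set.Ioo (0:ℝ) 1,
      F (s+1) z = z / (2 * Real.sqrt (1 - z^2)) * deriv (F s) z
        - (1/2) * ∑ j ∈ Finset.Icc 1 (s-1), F j z * F (s-j) z) :
    ∀ s, 1 ≤ s → ∃ Q : Polynomial ℝ, Q.natDegree ≤ s ∧
      ∀ z ∈ Set.Ioo (0:ℝ) 1,
        F s z = z^2 * Q.eval (z^2) / (1 - z^2) ^ ((3 * ((s:ℝ) + 1)) / 2) := by
  suffices h : ∀ s, 1 ≤ s → IsLGCoeff (F s) s from h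
  intro s hs
  induction s using Nat.strong_induction_on with
  | _ s ih =>
    obtain _ | _ | s := s
    · omega
    · exact isLGCoeff_one hF1
    · refine isLGCoeff_succ F (Nat.succ_pos s) (fun j hj => ?_) (hFrec (s + 1) (Nat.succ_pos s))
      rw [Finset.mem_Icc] at hj
      exact ih j (by omega) hj.1
end

section
/- For every s ≥ 1 there exists a polynomial P_s ∈ ℝ[X] of degree at most s such that, for every z ∈ (0,1), the function z ↦ P_s(z²)/(1−z²)^{3s/2} is differentiable at z with derivative −z^{−1}·(1−z²)^{1/2}·F̂_s(z). (That is, the Liouville–Green coefficients Ê_s(z) = ∫_z^∞ t^{−1}(1−t²)^{1/2} F̂_s(t) dt for Bessel's equation have the closed form P_s(z²)/(1−z²)^{3s/2}.) -/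
open Polynomial Real

/-!
By induction on the recursion, `F̂_s(z) = z² A_s(z²) (1 - z²)^(-(3s+3)/2)` with `deg A_s ≤ s`.
The derivative of `P(z²) (1 - z²)^a` is `2z (1 - z²)^(a-1) Q(z²)` with `Q = (1 - X) P' - a P`,
and `P ↦ Q` acts on `(X - 1)^k` as multiplication by `-(k + a)`. For `a = -3s/2` these
eigenvalues do not vanish for `k ≤ s`, so `Q = -A_s / 2` has a solution `P` of degree `≤ s`.
-/

namespace Polynomial

variable {K : Type*} [Field K]

noncomputable def lgDeriv (a : K) : K[X] →ₗ[K] K[X] :=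
  LinearMap.mulLeft K (1 - X) ∘ₗ derivative - a • LinearMap.id

lemma lgDeriv_apply (a : K) (P : K[X]) : lgDeriv a P = (1 - X) * derivative P - a • P := rfl

lemma lgDeriv_X_sub_one_pow (a : K) (k : ℕ) :
    lgDeriv a ((X - C 1) ^ k) = -((k : K) + a) • (X - C 1) ^ k := by
  rw [lgDeriv_apply]
  cases k with
  | zero => simp
  | succ k =>
    simp only [derivative_pow, derivative_sub, derivative_X, derivative_C, sub_zero, mul_one,
      Nat.add_sub_cancel, smul_eq_C_mul, map_neg, map_add, map_natCast]
    rw [pow_succ, C_1]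
    ring

lemma natDegree_lgDeriv_le (a : K) (P : K[X]) : (lgDeriv a P).natDegree ≤ P.natDegree := by
  rw [lgDeriv_apply]
  refine (natDegree_sub_le_of_le ?_ (natDegree_smul_le _ _)).trans (max_self _).le
  rcases Nat.eq_zero_or_pos P.natDegree with h | h
  · simp [derivative_of_natDegree_zero h]
  · have h1 : (1 - X : K[X]).natDegree ≤ 1 := (natDegree_sub_le _ _).trans (by simp)
    exact (natDegree_mul_le_of_le h1 (natDegree_derivative_le P)).trans (by omega)

lemma exists_lgDeriv_eq {a : K} {n : ℕ} (ha : ∀ k ≤ n, (k : K) + a ≠ 0) {B : K[X]}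
    (hB : B.natDegree ≤ n) : ∃ P : K[X], P.natDegree ≤ n ∧ lgDeriv a P = B := by
  have hsupp : ∀ k ∈ (taylor 1 B).support, k ≤ n := fun k hk =>
    (le_natDegree_of_mem_supp k hk).trans ((natDegree_taylor B 1).trans_le hB)
  refine ⟨(taylor 1 B).sum fun k c => C (c / -((k : K) + a)) * (X - C 1) ^ k, ?_, ?_⟩
  · refine natDegree_sum_le_of_forall_le _ _ fun k hk => (natDegree_C_mul_le _ _).trans ?_
    refine (natDegree_pow_le_of_le k
      (natDegree_sub_le_of_le natDegree_X_le (natDegree_C _).le)).trans ?_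
    simpa using hsupp k hk
  · conv_rhs => rw [← sum_taylor_eq B 1]
    simp only [Polynomial.sum, map_sum]
    refine Finset.sum_congr rfl fun k hk => ?_
    rw [← smul_eq_C_mul, ← smul_eq_C_mul, map_smul, lgDeriv_X_sub_one_pow, smul_smul,
      div_mul_cancel₀ _ (neg_ne_zero.2 (ha k (hsupp k hk)))]

end Polynomial

open Set Topology

lemma hasDerivAt_eval_sq_mul_rpow (P : ℝ[X]) (a : ℝ) {z : ℝ} (hz : 1 - z ^ 2 ≠ 0) :
    HasDerivAt (fun z => P.eval (z ^ 2) * (1 - z ^ 2) ^ a)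
      (2 * z * (lgDeriv a P).eval (z ^ 2) * (1 - z ^ 2) ^ (a - 1)) z := by
  have hsq : HasDerivAt (fun z : ℝ => z ^ 2) (2 * z) z := by simpa using hasDerivAt_pow 2 z
  refine (((P.hasDerivAt (z ^ 2)).comp z hsq).mul
    ((hsq.const_sub 1).rpow_const (p := a) (Or.inl hz))).congr_deriv ?_
  rw [lgDeriv_apply, rpow_sub_one hz]
  simp only [Function.comp_apply, eval_sub, eval_mul, eval_one, eval_X, eval_smul, smul_eq_mul]
  field_simp
  ring

noncomputable def besselForm (s : ℕ) (A : ℝ[X]) (z : ℝ) : ℝ :=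
  (X * A).eval (z ^ 2) * (1 - z ^ 2) ^ (-(3 * (s : ℝ) + 3) / 2)

lemma besselForm_mul (j k : ℕ) (A B : ℝ[X]) {z : ℝ} (hz : z ^ 2 < 1) :
    besselForm j A z * besselForm k B z = besselForm (j + k + 1) (X * (A * B)) z := by
  have hexp : -(3 * ((j + k + 1 : ℕ) : ℝ) + 3) / 2
      = -(3 * (j : ℝ) + 3) / 2 + -(3 * (k : ℝ) + 3) / 2 := by
    push_cast; ring
  simp only [besselForm, hexp, rpow_add (sub_pos.2 hz), eval_mul, eval_X]
  ring

lemma mul_deriv_besselForm (m : ℕ) (A : ℝ[X]) {z : ℝ} (hz : z ^ 2 < 1) :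
    z / (2 * √(1 - z ^ 2)) * deriv (besselForm m A) z
      = besselForm (m + 1) (lgDeriv (-(3 * (m : ℝ) + 3) / 2) (X * A)) z := by
  have hw : 0 < 1 - z ^ 2 := sub_pos.2 hz
  have hd : HasDerivAt (besselForm m A) _ z := hasDerivAt_eval_sq_mul_rpow (X * A) _ hw.ne'
  rw [hd.deriv, besselForm, sqrt_eq_rpow]
  have hexp : -(3 * (m : ℝ) + 3) / 2 - 1 = 1 / 2 + -(3 * ((m + 1 : ℕ) : ℝ) + 3) / 2 := by
    push_cast; ring
  rw [hexp, rpow_add hw]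
  simp only [eval_mul, eval_X]
  field_simp [(rpow_pos_of_pos hw (1 / 2)).ne']

lemma besselForm_one {z : ℝ} (hz : z ^ 2 < 1) :
    besselForm 1 (C (-1 / 8) * (X + C 4)) z = z ^ 2 * (z ^ 2 + 4) / (8 * (z ^ 2 - 1) ^ 3) := by
  have hw : 0 < 1 - z ^ 2 := sub_pos.2 hz
  have hexp : -(3 * ((1 : ℕ) : ℝ) + 3) / 2 = -((3 : ℕ) : ℝ) := by norm_num
  rw [besselForm, hexp, rpow_neg hw.le, rpow_natCast]
  simp only [eval_mul, eval_add, eval_C, eval_X]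
  have : z ^ 2 - 1 ≠ 0 := by linarith
  field_simp
  ring

lemma natDegree_besselStep_le {m : ℕ} (hm : 1 ≤ m) {A : ℕ → ℝ[X]}
    (hA : ∀ j ∈ Finset.Icc 1 m, (A j).natDegree ≤ j) :
    (lgDeriv (-(3 * (m : ℝ) + 3) / 2) (X * A m)
      - C (1 / 2) * X * ∑ j ∈ Finset.Icc 1 (m - 1), A j * A (m - j)).natDegree ≤ m + 1 := by
  have hX : ∀ P : ℝ[X], (X * P).natDegree ≤ 1 + P.natDegree := fun P =>
    natDegree_mul_le_of_le natDegree_X_le le_rfl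
  have hsum : (∑ j ∈ Finset.Icc 1 (m - 1), A j * A (m - j)).natDegree ≤ m := by
    refine natDegree_sum_le_of_forall_le _ _ fun j hj => ?_
    obtain ⟨hj1, hjm⟩ := Finset.mem_Icc.1 hj
    refine (natDegree_mul_le_of_le (hA j (Finset.mem_Icc.2 ⟨hj1, by omega⟩))
      (hA (m - j) (Finset.mem_Icc.2 ⟨by omega, by omega⟩))).trans (by omega)
  have hAm := hA m (Finset.mem_Icc.2 ⟨hm, le_rfl⟩)
  refine (natDegree_sub_le_of_le ((natDegree_lgDeriv_le _ _).trans (hX _))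
    (natDegree_mul_le_of_le ((natDegree_C_mul_le _ _).trans natDegree_X_le) hsum)).trans ?_
  omega

section

variable (F : ℕ → ℝ → ℝ)
  (hF1 : ∀ z ∈ Ioo (0:ℝ) 1, F 1 z = z^2 * (z^2 + 4) / (8 * (z^2 - 1)^3))
  (hFrec : ∀ s, 1 ≤ s → ∀ z ∈ Ioo (0:ℝ) 1,
    F (s+1) z = z / (2 * Real.sqrt (1 - z^2)) * deriv (F s) z
      - (1/2) * ∑ j ∈ Finset.Icc 1 (s-1), F j z * F (s-j) z)

include hFrec in
lemma eqOn_besselForm_succ {m : ℕ} (hm : 1 ≤ m) {A : ℕ → ℝ[X]}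
    (hA : ∀ j ∈ Finset.Icc 1 m, EqOn (F j) (besselForm j (A j)) (Ioo 0 1)) :
    EqOn (F (m + 1)) (besselForm (m + 1) (lgDeriv (-(3 * (m : ℝ) + 3) / 2) (X * A m)
      - C (1 / 2) * X * ∑ j ∈ Finset.Icc 1 (m - 1), A j * A (m - j))) (Ioo 0 1) := by
  intro z hz
  have hz2 : z ^ 2 < 1 := pow_lt_one₀ hz.1.le hz.2 two_ne_zero
  have hFm : F m =ᶠ[𝓝 z] besselForm m (A m) :=
    (hA m (Finset.mem_Icc.2 ⟨hm, le_rfl⟩)).eventuallyEq_of_mem (isOpen_Ioo.mem_nhds hz)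
  have hprod : ∀ j ∈ Finset.Icc 1 (m - 1), F j z * F (m - j) z
      = besselForm (m + 1) (X * (A j * A (m - j))) z := by
    intro j hj
    obtain ⟨hj1, hjm⟩ := Finset.mem_Icc.1 hj
    rw [hA j (Finset.mem_Icc.2 ⟨hj1, by omega⟩) hz,
      hA (m - j) (Finset.mem_Icc.2 ⟨by omega, by omega⟩) hz, besselForm_mul _ _ _ _ hz2,
      show j + (m - j) + 1 = m + 1 by omega]
  rw [hFrec m hm z hz, hFm.deriv_eq, mul_deriv_besselForm m _ hz2, Finset.sum_congr rfl hprod]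
  simp only [besselForm]
  rw [← Finset.sum_mul, ← eval_finsetSum, ← Finset.mul_sum, ← Finset.mul_sum]
  simp only [eval_sub, eval_mul, eval_C, eval_X]
  ring

include hF1 in
lemma eqOn_besselForm_one : EqOn (F 1) (besselForm 1 (C (-1 / 8) * (X + C 4))) (Ioo 0 1) :=
  fun z hz => (hF1 z hz).trans (besselForm_one (pow_lt_one₀ hz.1.le hz.2 two_ne_zero)).symm

include hF1 hFrec in
lemma exists_eqOn_besselForm {s : ℕ} (hs : 1 ≤ s) :
    ∃ A : ℝ[X], A.natDegree ≤ s ∧ EqOn (F s) (besselForm s A) (Ioo 0 1) := by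
  induction s using Nat.strong_induction_on with
  | _ s ih =>
  obtain ⟨m, rfl⟩ : ∃ m, s = m + 1 := ⟨s - 1, by omega⟩
  obtain rfl | hm := Nat.eq_zero_or_pos m
  · exact ⟨_, (natDegree_C_mul_le _ _).trans (natDegree_add_C.trans_le natDegree_X_le),
      eqOn_besselForm_one F hF1⟩
  choose! A hAdeg hA using fun j (hj : j ∈ Finset.Icc 1 m) =>
    ih j (Nat.lt_succ_of_le (Finset.mem_Icc.1 hj).2) (Finset.mem_Icc.1 hj).1
  exact ⟨_, natDegree_besselStep_le hm hAdeg, eqOn_besselForm_succ F hFrec hm hA⟩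

end

/-- For the Liouville–Green coefficient functions `F s` of
Bessel's equation on `(0,1)`, for every `s ≥ 1` there exists a polynomial
`P` of degree at most `s` such that `z ↦ P(z²)/(1-z²)^{3s/2}` has derivative
`-z⁻¹·√(1-z²)·F s z` at each `z ∈ (0,1)`; i.e. the coefficients
`Ê_s(z) = ∫_z^∞ t⁻¹(1-t²)^{1/2} F̂_s(t) dt` have this closed form. -/
theorem stmt5
    (F : ℕ → ℝ → ℝ)
    (hF1 : ∀ z ∈ Set.Ioo (0:ℝ) 1, F 1 z = z^2 * (z^2 + 4) / (8 * (z^2 - 1)^3))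
    (hFrec : ∀ s, 1 ≤ s → ∀ z ∈ Set.Ioo (0:ℝ) 1,
      F (s+1) z = z / (2 * Real.sqrt (1 - z^2)) * deriv (F s) z
        - (1/2) * ∑ j ∈ Finset.Icc 1 (s-1), F j z * F (s-j) z) :
    ∀ s, 1 ≤ s → ∃ P : Polynomial ℝ, P.natDegree ≤ s ∧
      ∀ z ∈ Set.Ioo (0:ℝ) 1,
        HasDerivAt (fun z : ℝ => P.eval (z^2) / (1 - z^2) ^ ((3 * (s:ℝ)) / 2))
          (-(z⁻¹ * Real.sqrt (1 - z^2) * F s z)) z := by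
  intro s hs
  obtain ⟨A, hAdeg, hF⟩ := exists_eqOn_besselForm F hF1 hFrec hs
  have hroots : ∀ k ≤ s, (k : ℝ) + -(3 * (s : ℝ) / 2) ≠ 0 := fun k hk => by
    have : (k : ℝ) ≤ s := by exact_mod_cast hk
    have : (1 : ℝ) ≤ s := by exact_mod_cast hs
    exact (by linarith : (k : ℝ) + -(3 * (s : ℝ) / 2) < 0).ne
  obtain ⟨P, hPdeg, hP⟩ := exists_lgDeriv_eq hroots (B := -(C (1 / 2) * A))
    ((natDegree_neg _).trans_le ((natDegree_C_mul_le _ _).trans hAdeg))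
  refine ⟨P, hPdeg, fun z hz => ?_⟩
  have hpos : ∀ w ∈ Ioo (0 : ℝ) 1, 0 < 1 - w ^ 2 := fun w hw =>
    sub_pos.2 (pow_lt_one₀ hw.1.le hw.2 two_ne_zero)
  have hdiv : (fun w => P.eval (w ^ 2) * (1 - w ^ 2) ^ (-(3 * (s : ℝ) / 2))) =ᶠ[𝓝 z]
      fun w => P.eval (w ^ 2) / (1 - w ^ 2) ^ (3 * (s : ℝ) / 2) := by
    filter_upwards [isOpen_Ioo.mem_nhds hz] with w hw
    rw [rpow_neg (hpos w hw).le, ← div_eq_mul_inv]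
  refine ((hasDerivAt_eval_sq_mul_rpow P _ (hpos z hz).ne').congr_of_eventuallyEq
    hdiv.symm).congr_deriv ?_
  have hexp : -(3 * (s : ℝ) / 2) - 1 = 1 / 2 + -(3 * (s : ℝ) + 3) / 2 := by ring
  rw [hP, hF hz, besselForm, sqrt_eq_rpow, hexp, rpow_add (hpos z hz)]
  simp only [eval_neg, eval_mul, eval_C, eval_X]
  field_simp [hz.1.ne']
end

section
/- Define ζ : (0,1) → ℝ by ζ(z) = ((3/2)·ξ(z))^{2/3} (a real power, well defined since ξ(z) > 0). Then for every z ∈ (0,1), ζ is differentiable at z with derivative −√(1−z²)/(z·√(ζ(z))). -/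
/-!
With `s = √(1 - z²)` one has `z² = (1 - s)(1 + s)`, so `ξ(z) = artanh s - s`, which is positive
by the series `log (1 + s) - log (1 - s) = 2 (s + s³/3 + ⋯)`. Differentiating gives
`ξ'(z) = -√(1 - z²) / z`, and `ζ = ((3/2) ξ)^{2/3}` satisfies `ζ' = ξ' / √ζ` by the chain rule.
-/

open Real Set Topology

theorem Real.two_mul_lt_log_one_add_sub_log_one_sub {s : ℝ} (hs₀ : 0 < s) (hs₁ : s < 1) :
    2 * s < log (1 + s) - log (1 - s) := by
  have hsum := hasSum_log_sub_log_of_abs_lt_one (abs_lt.2 ⟨by linarith, hs₁⟩)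
  have hle := sum_le_hasSum (Finset.range 2) (fun k _ ↦ by positivity) hsum
  norm_num [Finset.sum_range_succ] at hle
  nlinarith [pow_pos hs₀ 3]

noncomputable def besselXi (z : ℝ) : ℝ :=
  log ((1 + √(1 - z ^ 2)) / z) - √(1 - z ^ 2)

theorem besselXi_pos {z : ℝ} (hz : z ∈ Ioo (0 : ℝ) 1) : 0 < besselXi z := by
  obtain ⟨hz₀, hz₁⟩ := hz
  have h1z : 0 < 1 - z ^ 2 := by nlinarith
  set s := √(1 - z ^ 2)
  have hs₀ : 0 < s := sqrt_pos.2 h1z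
  have hs₁ : s < 1 := (sqrt_lt' one_pos).2 (by nlinarith)
  have hfactor : (1 - s) * (1 + s) = z * z := by nlinarith [sq_sqrt h1z.le]
  have hlog_z : 2 * log z = log (1 - s) + log (1 + s) := by
    rw [← log_mul (by linarith) (by linarith), hfactor, log_mul hz₀.ne' hz₀.ne']
    ring
  have := two_mul_lt_log_one_add_sub_log_one_sub hs₀ hs₁
  rw [besselXi, log_div (by linarith) hz₀.ne']
  linarith

theorem hasDerivAt_besselXi {z : ℝ} (hz : z ∈ Ioo (0 : ℝ) 1) :
    HasDerivAt besselXi (-√(1 - z ^ 2) / z) z := by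
  obtain ⟨hz₀, hz₁⟩ := hz
  have h1z : 0 < 1 - z ^ 2 := by nlinarith
  set s := √(1 - z ^ 2)
  have hs₀ : 0 < s := sqrt_pos.2 h1z
  have hs : HasDerivAt (fun w : ℝ ↦ √(1 - w ^ 2)) (-(2 * z) / (2 * s)) z := by
    have h : HasDerivAt (fun w : ℝ ↦ 1 - w ^ 2) (-(2 * z)) z := by
      simpa using (hasDerivAt_pow 2 z).const_sub 1
    exact h.sqrt h1z.ne'
  have hlog_num : HasDerivAt (fun w : ℝ ↦ log (1 + √(1 - w ^ 2)))
      ((-(2 * z) / (2 * s)) / (1 + s)) z := by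
    simpa using (hs.const_add 1).log (by positivity : 1 + s ≠ 0)
  have hsplit : besselXi =ᶠ[𝓝 z] fun w ↦ log (1 + √(1 - w ^ 2)) - log w - √(1 - w ^ 2) := by
    filter_upwards [isOpen_Ioi.mem_nhds hz₀] with w hw
    rw [besselXi, log_div (by positivity) (ne_of_gt hw)]
  refine (((hlog_num.sub (hasDerivAt_log hz₀.ne')).sub hs).congr_of_eventuallyEq hsplit).congr_deriv ?_
  field_simp
  linear_combination s * sq_sqrt h1z.le

theorem HasDerivAt.three_halves_mul_rpow_two_thirds {f : ℝ → ℝ} {f' x : ℝ}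
    (hf : HasDerivAt f f' x) (hfx : 0 < f x) :
    HasDerivAt (fun w ↦ (3 / 2 * f w) ^ (2 / 3 : ℝ)) (f' / √((3 / 2 * f x) ^ (2 / 3 : ℝ))) x := by
  have ha : 0 < 3 / 2 * f x := by positivity
  refine ((hf.const_mul (3 / 2)).rpow_const (p := 2 / 3) (Or.inl ha.ne')).congr_deriv ?_
  rw [sqrt_eq_rpow, ← rpow_mul ha.le, show (2 / 3 - 1 : ℝ) = -(1 / 3) by norm_num,
    rpow_neg ha.le]
  have : 0 < (3 / 2 * f x) ^ (2 / 3 * (1 / 2) : ℝ) := rpow_pos_of_pos ha _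
  norm_num
  field_simp

/-- With `ξ(z) = log((1+√(1-z²))/z) - √(1-z²)` (positive on
`(0,1)`) and `ζ(z) = ((3/2)·ξ(z))^{2/3}`, for every `z ∈ (0,1)` the function
`ζ` has derivative `-√(1-z²)/(z·√(ζ(z)))` at `z`. -/
theorem stmt7
    (xi zeta : ℝ → ℝ)
    (hxi : ∀ z ∈ Set.Ioo (0:ℝ) 1,
      xi z = Real.log ((1 + Real.sqrt (1 - z^2)) / z) - Real.sqrt (1 - z^2))
    (hzeta : ∀ z ∈ Set.Ioo (0:ℝ) 1,
      zeta z = ((3/2) * xi z) ^ ((2:ℝ)/3)) :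
    ∀ z ∈ Set.Ioo (0:ℝ) 1,
      HasDerivAt zeta (-Real.sqrt (1 - z^2) / (z * Real.sqrt (zeta z))) z := by
  intro z hz
  have hzeta_eq : zeta =ᶠ[𝓝 z] fun w ↦ (3 / 2 * besselXi w) ^ (2 / 3 : ℝ) := by
    filter_upwards [isOpen_Ioo.mem_nhds hz] with w hw
    rw [hzeta w hw, hxi w hw, besselXi]
  have hderiv := ((hasDerivAt_besselXi hz).three_halves_mul_rpow_two_thirds
    (besselXi_pos hz)).congr_of_eventuallyEq hzeta_eq
  rwa [← hzeta_eq.eq_of_nhds, div_div] at hderiv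
end

section
/- Let u > 0 and let w : ℝ → ℝ be twice differentiable on (0,∞) with w″(ζ) = u²·ζ·w(ζ) for all ζ > 0. Define y(ζ) = ζ^{−1/2}·w′(ζ) for ζ > 0. Then y is twice differentiable on (0,∞) and y″(ζ) = (u²·ζ + 3/(4ζ²))·y(ζ) for all ζ > 0. -/
/-!
With `y = w' / √x`, the Airy equation `w'' = c x w` gives `y' = c √x w - y / (2x)`. Differentiating
once more, the two `w`-terms `± c w / (2√x)` cancel precisely because the coefficient `c x` is
linear, and what is left is `y'' = (c x + 3 / (4x²)) y`.
-/

open Real Set Filter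

theorem rpow_neg_half_eq_inv_sqrt {x : ℝ} (hx : 0 ≤ x) : x ^ (-(1:ℝ)/2) = (√x)⁻¹ := by
  rw [neg_div, rpow_neg hx, sqrt_eq_rpow, one_div]

theorem HasDerivAt.div_sqrt {f : ℝ → ℝ} {f' x : ℝ} (hf : HasDerivAt f f' x) (hx : 0 < x) :
    HasDerivAt (fun x => f x / √x) (f' / √x - f x / √x / (2 * x)) x := by
  have hs : 0 < √x := sqrt_pos.2 hx
  refine (hf.div (hasDerivAt_sqrt hx.ne') hs.ne').congr_deriv ?_
  field_simp
  rw [sq_sqrt hx.le]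
  ring

namespace Airy

variable {c : ℝ} {w w' y : ℝ → ℝ}

theorem hasDerivAt_div_sqrt {x : ℝ} (hx : 0 < x) (hw' : HasDerivAt w' (c * x * w x) x) :
    HasDerivAt (fun x => w' x / √x) (c * √x * w x - w' x / √x / (2 * x)) x := by
  refine (hw'.div_sqrt hx).congr_deriv ?_
  have hs : 0 < √x := sqrt_pos.2 hx
  field_simp
  rw [sq_sqrt hx.le]
  ring

theorem hasDerivAt_sqrt_mul_sub_div {x : ℝ} (hx : 0 < x)
    (hw : HasDerivAt w (w' x) x) (hw' : HasDerivAt w' (c * x * w x) x) :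
    HasDerivAt (fun x => c * √x * w x - w' x / √x / (2 * x))
      ((c * x + 3 / (4 * x ^ 2)) * (w' x / √x)) x := by
  have hs : 0 < √x := sqrt_pos.2 hx
  have hsqrt := ((hasDerivAt_sqrt hx.ne').const_mul c).mul hw
  have hquot := (hw'.div_sqrt hx).div ((hasDerivAt_id x).const_mul 2) (by positivity)
  refine (hsqrt.sub hquot).congr_deriv ?_
  simp only [id]
  field_simp
  rw [sq_sqrt hx.le]
  ring

theorem hasDerivAt_of_eqOn (hw' : ∀ x ∈ Ioi (0:ℝ), HasDerivAt w' (c * x * w x) x)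
    (hy : EqOn y (fun x => w' x / √x) (Ioi 0)) {x : ℝ} (hx : 0 < x) :
    HasDerivAt y (c * √x * w x - w' x / √x / (2 * x)) x :=
  (hasDerivAt_div_sqrt hx (hw' x hx)).congr_of_eventuallyEq
    (eventuallyEq_of_mem (Ioi_mem_nhds hx) hy)

theorem hasDerivAt_deriv_of_eqOn (hw : ∀ x ∈ Ioi (0:ℝ), HasDerivAt w (w' x) x)
    (hw' : ∀ x ∈ Ioi (0:ℝ), HasDerivAt w' (c * x * w x) x)
    (hy : EqOn y (fun x => w' x / √x) (Ioi 0)) {x : ℝ} (hx : 0 < x) :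
    HasDerivAt (deriv y) ((c * x + 3 / (4 * x ^ 2)) * y x) x := by
  rw [hy hx]
  exact (hasDerivAt_sqrt_mul_sub_div hx (hw x hx) (hw' x hx)).congr_of_eventuallyEq
    (eventuallyEq_of_mem (Ioi_mem_nhds hx) fun z hz => (hasDerivAt_of_eqOn hw' hy hz).deriv)

end Airy

theorem stmt10_general
    (u : ℝ) (w : ℝ → ℝ)
    (hw : DifferentiableOn ℝ w (Set.Ioi 0))
    (hw' : DifferentiableOn ℝ (deriv w) (Set.Ioi 0))
    (hode : ∀ ζ ∈ Set.Ioi (0:ℝ), deriv (deriv w) ζ = u^2 * ζ * w ζ)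
    (y : ℝ → ℝ)
    (hy : ∀ ζ ∈ Set.Ioi (0:ℝ), y ζ = ζ ^ (-(1:ℝ)/2) * deriv w ζ) :
    DifferentiableOn ℝ y (Set.Ioi 0) ∧
    DifferentiableOn ℝ (deriv y) (Set.Ioi 0) ∧
    ∀ ζ ∈ Set.Ioi (0:ℝ),
      deriv (deriv y) ζ = (u^2 * ζ + 3 / (4 * ζ^2)) * y ζ := by
  have hw₁ : ∀ x ∈ Ioi (0:ℝ), HasDerivAt w (deriv w x) x := fun x hx =>
    (hw.differentiableAt (Ioi_mem_nhds hx)).hasDerivAt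
  have hw₂ : ∀ x ∈ Ioi (0:ℝ), HasDerivAt (deriv w) (u ^ 2 * x * w x) x := fun x hx =>
    hode x hx ▸ (hw'.differentiableAt (Ioi_mem_nhds hx)).hasDerivAt
  have hy' : EqOn y (fun x => deriv w x / √x) (Ioi 0) := fun x hx => by
    rw [hy x hx, rpow_neg_half_eq_inv_sqrt (le_of_lt hx), inv_mul_eq_div]
  have hy₂ := fun x (hx : x ∈ Ioi (0:ℝ)) => Airy.hasDerivAt_deriv_of_eqOn hw₁ hw₂ hy' hx
  exact ⟨fun x hx => (Airy.hasDerivAt_of_eqOn hw₂ hy' hx).differentiableAt.differentiableWithinAt,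
    fun x hx => (hy₂ x hx).differentiableAt.differentiableWithinAt, fun x hx => (hy₂ x hx).deriv⟩

/-- Let `u > 0` and let `w` be twice differentiable on `(0,∞)`
with `w'' (ζ) = u²·ζ·w(ζ)` there. Then `y(ζ) = ζ^{-1/2}·w'(ζ)` is twice
differentiable on `(0,∞)` and satisfies
`y''(ζ) = (u²·ζ + 3/(4ζ²))·y(ζ)` for all `ζ > 0`. -/
theorem stmt10
    (u : ℝ) (hu : 0 < u) (w : ℝ → ℝ)
    (hw : DifferentiableOn ℝ w (Set.Ioi 0))
    (hw' : DifferentiableOn ℝ (deriv w) (Set.Ioi 0))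
    (hode : ∀ ζ ∈ Set.Ioi (0:ℝ), deriv (deriv w) ζ = u^2 * ζ * w ζ)
    (y : ℝ → ℝ)
    (hy : ∀ ζ ∈ Set.Ioi (0:ℝ), y ζ = ζ ^ (-(1:ℝ)/2) * deriv w ζ) :
    DifferentiableOn ℝ y (Set.Ioi 0) ∧
    DifferentiableOn ℝ (deriv y) (Set.Ioi 0) ∧
    ∀ ζ ∈ Set.Ioi (0:ℝ),
      deriv (deriv y) ζ = (u^2 * ζ + 3 / (4 * ζ^2)) * y ζ :=
  stmt10_general u w hw hw' hode y hy
end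

section
/- Let u > 0, c ∈ ℝ, and let y : (0,∞) → ℝ be twice differentiable with y″(ζ) = (u²·ζ + c/ζ²)·y(ζ) for all ζ > 0. Define V : (0,∞) → ℝ by V(ξ) = ζ(ξ)^{1/4}·y(ζ(ξ)) where ζ(ξ) = ((3/2)·ξ)^{2/3}. Then V is twice differentiable on (0,∞) and V″(ξ) = (u² + (16c−5)/(36ξ²))·V(ξ) for all ξ > 0. (The case c = 0 gives the coefficient −5/(36ξ²), corresponding to V = ζ^{1/4}·Ai(u^{2/3}ζ); the case c = 3/4 gives +7/(36ξ²), corresponding to Ṽ = ζ^{−1/4}·Ai′(u^{2/3}ζ).) -/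
/-!
Put `p = ((3/2) ξ)^{1/6}`, so that `p⁶ = (3/2) ξ`, `ζ = p⁴`, `V = p · y(p⁴)` and `p' = 1/(4p⁵)`.
Every power involved is then an integer power of `p`, and the chain rule gives
`V' = y(ζ)/(4p⁵) + y'(ζ)/p` and, since the two `y'` terms cancel, `V'' = -5 y(ζ)/(16 p¹¹) + y''(ζ)/p³`.
Inserting the equation for `y''` yields `V'' = (u² + (16c - 5)/(16 p¹²)) V`, and `16 p¹² = 36 ξ²`.
-/

open Real Set

noncomputable def airyRoot (ξ : ℝ) : ℝ := ((3/2) * ξ) ^ (1/6 : ℝ)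

namespace airyRoot

variable {ξ : ℝ}

lemma pos (hξ : 0 < ξ) : 0 < airyRoot ξ := by
  unfold airyRoot; positivity

lemma nonneg (hξ : 0 ≤ ξ) : 0 ≤ airyRoot ξ := by
  unfold airyRoot; positivity

lemma pow_six (hξ : 0 ≤ ξ) : airyRoot ξ ^ 6 = (3/2) * ξ := by
  rw [airyRoot, ← rpow_mul_natCast (by positivity)]
  norm_num

lemma rpow_two_thirds (hξ : 0 ≤ ξ) : ((3/2) * ξ) ^ ((2:ℝ)/3) = airyRoot ξ ^ 4 := by
  rw [airyRoot, ← rpow_mul_natCast (by positivity)]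
  norm_num

lemma rpow_two_thirds_rpow_quarter (hξ : 0 ≤ ξ) :
    (((3/2) * ξ) ^ ((2:ℝ)/3)) ^ ((1:ℝ)/4) = airyRoot ξ := by
  rw [rpow_two_thirds hξ, ← rpow_natCast, ← rpow_mul (nonneg hξ)]
  norm_num

lemma thirty_six_mul_sq (hξ : 0 ≤ ξ) : 36 * ξ ^ 2 = 16 * airyRoot ξ ^ 12 := by
  rw [show airyRoot ξ ^ 12 = (airyRoot ξ ^ 6) ^ 2 by ring, pow_six hξ]
  ring

lemma hasDerivAt (hξ : 0 < ξ) : HasDerivAt airyRoot (1 / (4 * airyRoot ξ ^ 5)) ξ := by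
  have hs : 0 < (3/2) * ξ := by positivity
  have h := ((hasDerivAt_id ξ).const_mul (3/2 : ℝ)).rpow_const (p := 1/6) (Or.inl hs.ne')
  refine h.congr_deriv ?_
  have hp := pos hξ
  simp only [id]
  rw [rpow_sub_one hs.ne', ← airyRoot, ← pow_six hξ.le]
  field_simp
  norm_num

/-- `ζ = p⁴` has derivative `ζ' = 4p³ · p' = 1/p²`. -/
lemma hasDerivAt_comp_pow_four {f : ℝ → ℝ} {f' : ℝ} (hξ : 0 < ξ)
    (hf : HasDerivAt f f' (airyRoot ξ ^ 4)) :
    HasDerivAt (fun t => f (airyRoot t ^ 4)) (f' / airyRoot ξ ^ 2) ξ := by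
  have h := hf.comp ξ ((hasDerivAt hξ).fun_pow 4)
  refine h.congr_deriv ?_
  have hp := pos hξ
  norm_num
  field_simp

lemma hasDerivAt_mul_comp_pow_four {y : ℝ → ℝ} (hξ : 0 < ξ)
    (hy : DifferentiableAt ℝ y (airyRoot ξ ^ 4)) :
    HasDerivAt (fun t => airyRoot t * y (airyRoot t ^ 4))
      (y (airyRoot ξ ^ 4) / (4 * airyRoot ξ ^ 5) + deriv y (airyRoot ξ ^ 4) / airyRoot ξ) ξ := by
  have h := (hasDerivAt hξ).fun_mul (hasDerivAt_comp_pow_four hξ hy.hasDerivAt)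
  refine h.congr_deriv ?_
  have hp := pos hξ
  field_simp

lemma hasDerivAt_first_derivative {y : ℝ → ℝ} (hξ : 0 < ξ)
    (hy : DifferentiableAt ℝ y (airyRoot ξ ^ 4))
    (hy' : DifferentiableAt ℝ (deriv y) (airyRoot ξ ^ 4)) :
    HasDerivAt (fun t => y (airyRoot t ^ 4) / (4 * airyRoot t ^ 5)
        + deriv y (airyRoot t ^ 4) / airyRoot t)
      (-(5 * y (airyRoot ξ ^ 4)) / (16 * airyRoot ξ ^ 11)
        + deriv (deriv y) (airyRoot ξ ^ 4) / airyRoot ξ ^ 3) ξ := by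
  have hp := pos hξ
  have h := ((hasDerivAt_comp_pow_four hξ hy.hasDerivAt).fun_div
      (((hasDerivAt hξ).fun_pow 5).const_mul 4) (by positivity)).fun_add
    ((hasDerivAt_comp_pow_four hξ hy'.hasDerivAt).fun_div (hasDerivAt hξ) hp.ne')
  refine h.congr_deriv ?_
  norm_num
  field_simp
  ring

end airyRoot

theorem stmt11_general
    (u c : ℝ) (y : ℝ → ℝ)
    (hy : DifferentiableOn ℝ y (Set.Ioi 0))
    (hy' : DifferentiableOn ℝ (deriv y) (Set.Ioi 0))
    (hode : ∀ ζ ∈ Set.Ioi (0:ℝ),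
      deriv (deriv y) ζ = (u^2 * ζ + c / ζ^2) * y ζ)
    (V : ℝ → ℝ)
    (hV : ∀ ξ ∈ Set.Ioi (0:ℝ),
      V ξ = (((3/2) * ξ) ^ ((2:ℝ)/3)) ^ ((1:ℝ)/4)
        * y (((3/2) * ξ) ^ ((2:ℝ)/3))) :
    DifferentiableOn ℝ V (Set.Ioi 0) ∧
    DifferentiableOn ℝ (deriv V) (Set.Ioi 0) ∧
    ∀ ξ ∈ Set.Ioi (0:ℝ),
      deriv (deriv V) ξ = (u^2 + (16 * c - 5) / (36 * ξ^2)) * V ξ := by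
  have hV_eq : EqOn V (fun t => airyRoot t * y (airyRoot t ^ 4)) (Ioi 0) := fun t ht => by
    rw [hV t ht, airyRoot.rpow_two_thirds_rpow_quarter ht.le, airyRoot.rpow_two_thirds ht.le]
  have hζ : ∀ ξ ∈ Ioi (0:ℝ), Ioi (0:ℝ) ∈ nhds (airyRoot ξ ^ 4) := fun ξ hξ =>
    Ioi_mem_nhds (pow_pos (airyRoot.pos hξ) 4)
  have hV' : ∀ ξ ∈ Ioi (0:ℝ), HasDerivAt V _ ξ := fun ξ hξ =>
    (airyRoot.hasDerivAt_mul_comp_pow_four hξ (hy.differentiableAt (hζ ξ hξ))).congr_of_eventuallyEq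
      (hV_eq.eventuallyEq_of_mem (Ioi_mem_nhds hξ))
  have hV'' : ∀ ξ ∈ Ioi (0:ℝ), HasDerivAt (deriv V) _ ξ := fun ξ hξ =>
    (airyRoot.hasDerivAt_first_derivative hξ (hy.differentiableAt (hζ ξ hξ))
      (hy'.differentiableAt (hζ ξ hξ))).congr_of_eventuallyEq
      (Filter.eventuallyEq_of_mem (Ioi_mem_nhds hξ) fun t ht => (hV' t ht).deriv)
  refine ⟨fun ξ hξ => (hV' ξ hξ).differentiableAt.differentiableWithinAt,
    fun ξ hξ => (hV'' ξ hξ).differentiableAt.differentiableWithinAt, fun ξ hξ => ?_⟩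
  have hp := airyRoot.pos hξ
  rw [(hV'' ξ hξ).deriv, hode _ (pow_pos hp 4), hV_eq hξ, airyRoot.thirty_six_mul_sq hξ.le]
  field_simp
  ring

/-- Let `u > 0`, `c ∈ ℝ`, and let `y` be twice differentiable on
`(0,∞)` with `y''(ζ) = (u²·ζ + c/ζ²)·y(ζ)` there. With
`ζ(ξ) = ((3/2)ξ)^{2/3}` and `V(ξ) = ζ(ξ)^{1/4}·y(ζ(ξ))`, the function `V`
is twice differentiable on `(0,∞)` and
`V''(ξ) = (u² + (16c-5)/(36ξ²))·V(ξ)` for all `ξ > 0`. -/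
theorem stmt11
    (u c : ℝ) (hu : 0 < u) (y : ℝ → ℝ)
    (hy : DifferentiableOn ℝ y (Set.Ioi 0))
    (hy' : DifferentiableOn ℝ (deriv y) (Set.Ioi 0))
    (hode : ∀ ζ ∈ Set.Ioi (0:ℝ),
      deriv (deriv y) ζ = (u^2 * ζ + c / ζ^2) * y ζ)
    (V : ℝ → ℝ)
    (hV : ∀ ξ ∈ Set.Ioi (0:ℝ),
      V ξ = (((3/2) * ξ) ^ ((2:ℝ)/3)) ^ ((1:ℝ)/4)
        * y (((3/2) * ξ) ^ ((2:ℝ)/3))) :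
    DifferentiableOn ℝ V (Set.Ioi 0) ∧
    DifferentiableOn ℝ (deriv V) (Set.Ioi 0) ∧
    ∀ ξ ∈ Set.Ioi (0:ℝ),
      deriv (deriv V) ξ = (u^2 + (16 * c - 5) / (36 * ξ^2)) * V ξ :=
  stmt11_general u c y hy hy' hode V hV
end

section
/- Define F(δ) = 3^{1/3}·(log((1+δ)/√(1−δ²)) − δ)^{1/3}/δ for δ ∈ (0,1) (the cube root is the real power of a positive number, since log((1+δ)/√(1−δ²)) − δ > 0 for δ ∈ (0,1)). Then F(δ) − 1 − δ²/5 − (18/175)·δ⁴ = O(δ⁶) as δ → 0⁺. In particular F(δ) → 1 as δ → 0⁺. -/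
open Real Filter Asymptotics

-- log((1+δ)/√(1-δ²)) = (log(1+δ) - log(1-δ))/2
lemma my_log_rw {δ : ℝ} (h0 : 0 < δ) (h1 : δ < 1) :
    Real.log ((1 + δ) / Real.sqrt (1 - δ^2))
      = (Real.log (1 + δ) - Real.log (1 - δ)) / 2 := by
  have hp : (0:ℝ) < 1 + δ := by linarith
  have hm : (0:ℝ) < 1 - δ := by linarith
  have hsq : (1:ℝ) - δ^2 = (1 + δ) * (1 - δ) := by ring
  have hsqpos : (0:ℝ) < 1 - δ^2 := by nlinarith
  rw [Real.log_div hp.ne' (Real.sqrt_ne_zero'.2 hsqpos), Real.log_sqrt hsqpos.le,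
    hsq, Real.log_mul hp.ne' hm.ne']
  ring

-- Taylor bound for artanh
lemma my_artanh {δ : ℝ} (h0 : 0 < δ) (h1 : δ ≤ 1/2) :
    |Real.log ((1 + δ) / Real.sqrt (1 - δ^2)) - (δ + δ^3/3 + δ^5/5 + δ^7/7)| ≤ 2 * δ^9 := by
  have h1' : δ < 1 := by linarith
  have habs : |δ| < 1 := by rw [abs_of_pos h0]; linarith
  have habs' : |(-δ)| < 1 := by rwa [abs_neg]
  have hA := Real.abs_log_sub_add_sum_range_le habs 8
  have hB := Real.abs_log_sub_add_sum_range_le habs' 8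
  rw [abs_of_pos h0] at hA
  rw [abs_neg, abs_of_pos h0] at hB
  simp only [Finset.sum_range_succ, Finset.sum_range_zero] at hA hB
  norm_num at hA hB
  rw [my_log_rw h0 h1']
  have hm : (0:ℝ) < 1 - δ := by linarith
  have hbound : δ^9 / (1 - δ) ≤ 2 * δ^9 := by
    rw [div_le_iff₀ hm]
    nlinarith [pow_pos h0 9]
  rw [abs_le] at hA hB ⊢
  constructor <;> nlinarith [hA.1, hA.2, hB.1, hB.2]

lemma my_cube {x : ℝ} (hx : 0 ≤ x) : (x ^ ((1:ℝ)/3)) ^ 3 = x := by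
  rw [← Real.rpow_natCast (x ^ ((1:ℝ)/3)) 3, ← Real.rpow_mul hx]
  norm_num



set_option maxHeartbeats 1000000 in
lemma my_main2 {δ L : ℝ} (h0 : 0 < δ) (h1 : δ ≤ 1/2)
    (hT : |L - (δ + δ^3/3 + δ^5/5 + δ^7/7)| ≤ 2 * δ^9) :
    |(3:ℝ) ^ ((1:ℝ)/3) * (L - δ) ^ ((1:ℝ)/3) / δ
      - (1 + δ^2/5 + 18/175 * δ^4)| ≤ 3 * δ^6 := by
  rw [abs_le] at hT
  have h9 : (0:ℝ) < δ^9 := pow_pos h0 9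
  have hδ3 : (0:ℝ) < δ^3 := pow_pos h0 3
  have hδ2 : δ^2 ≤ 1/4 := by nlinarith
  have hδ4 : δ^4 ≤ 1/16 := by nlinarith [pow_pos h0 2]
  have hδ6 : δ^6 ≤ 1/64 := by nlinarith [pow_pos h0 2, pow_pos h0 4, pow_pos h0 6]
  have hg : 0 < L - δ := by
    nlinarith [hT.1, pow_pos h0 5, pow_pos h0 7,
      mul_le_mul_of_nonneg_left hδ6 hδ3.le]
  have hkey : |3 * (L - δ) - δ^3 * (1 + δ^2/5 + 18/175 * δ^4)^3| ≤ 7 * δ^9 := by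
    rw [abs_le]
    constructor <;>
      nlinarith [hT.1, hT.2, h9.le,
        mul_le_mul_of_nonneg_left hδ2 h9.le,
        mul_le_mul_of_nonneg_left hδ4 h9.le,
        mul_le_mul_of_nonneg_left hδ6 h9.le,
        mul_nonneg (mul_nonneg h9.le (sq_nonneg δ)) (sq_nonneg δ),
        mul_nonneg h9.le (sq_nonneg δ),
        mul_nonneg (mul_nonneg (mul_nonneg h9.le (sq_nonneg δ)) (sq_nonneg δ)) (sq_nonneg δ)]
  set p : ℝ := 1 + δ^2/5 + 18/175 * δ^4 with hpdef
  set a : ℝ := (3:ℝ) ^ ((1:ℝ)/3) * (L - δ) ^ ((1:ℝ)/3) / δ with hadef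
  have ha3 : a ^ 3 = 3 * (L - δ) / δ ^ 3 := by
    rw [hadef, div_pow, mul_pow, my_cube (by norm_num : (0:ℝ) ≤ 3), my_cube hg.le]
  have ha0 : 0 ≤ a := by
    apply div_nonneg _ h0.le
    exact mul_nonneg (Real.rpow_nonneg (by norm_num) _) (Real.rpow_nonneg hg.le _)
  have hdiff : a^3 - p^3 = (3 * (L - δ) - δ^3 * p^3) / δ^3 := by
    rw [ha3]; field_simp
  have h73 : |a^3 - p^3| ≤ 7 * δ^6 := by
    rw [hdiff, abs_div, abs_of_pos hδ3, div_le_iff₀ hδ3]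
    calc |3 * (L - δ) - δ^3 * p^3| ≤ 7 * δ^9 := hkey
      _ = 7 * δ^6 * δ^3 := by ring
  have hp1 : (1:ℝ) ≤ p := by rw [hpdef]; nlinarith [pow_pos h0 2, pow_pos h0 4]
  have ha1 : (1:ℝ) ≤ a := by
    have h3g : δ^3 ≤ 3 * (L - δ) := by
      nlinarith [hT.1, pow_pos h0 7, mul_le_mul_of_nonneg_left hδ4 (pow_pos h0 5).le]
    have haux : (1:ℝ) ≤ a^3 := by rw [ha3, le_div_iff₀ hδ3]; linarith
    nlinarith [sq_nonneg (a - 1), sq_nonneg (a + 1)]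
  have hid : a^3 - p^3 = (a - p) * (a^2 + a*p + p^2) := by ring
  have hden : (3:ℝ) ≤ a^2 + a*p + p^2 := by nlinarith
  have hfin : 3 * |a - p| ≤ |a^3 - p^3| := by
    rw [hid, abs_mul, abs_of_pos (by linarith : (0:ℝ) < a^2 + a*p + p^2)]
    nlinarith [abs_nonneg (a - p)]
  linarith [abs_nonneg (a - p)]

/-- With
`F(δ) = 3^{1/3}·(log((1+δ)/√(1-δ²)) - δ)^{1/3}/δ` on `(0,1)`, one has
`F(δ) - 1 - δ²/5 - (18/175)δ⁴ = O(δ⁶)` as `δ → 0⁺`; in particular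
`F(δ) → 1` as `δ → 0⁺`. -/
theorem stmt14
    (F : ℝ → ℝ)
    (hF : ∀ δ ∈ Set.Ioo (0:ℝ) 1,
      F δ = (3:ℝ) ^ ((1:ℝ)/3)
        * (Real.log ((1 + δ) / Real.sqrt (1 - δ^2)) - δ) ^ ((1:ℝ)/3) / δ) :
    (fun δ : ℝ => F δ - 1 - δ^2 / 5 - (18/175) * δ^4)
      =O[nhdsWithin 0 (Set.Ioi 0)] (fun δ : ℝ => δ^6) ∧
    Tendsto F (nhdsWithin 0 (Set.Ioi 0)) (nhds 1) := by
  have hmem : Set.Ioo (0:ℝ) (1/2) ∈ nhdsWithin 0 (Set.Ioi 0) :=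
    Ioo_mem_nhdsGT_of_mem ⟨le_refl _, by norm_num⟩
  have hO : (fun δ : ℝ => F δ - 1 - δ^2 / 5 - (18/175) * δ^4)
      =O[nhdsWithin 0 (Set.Ioi 0)] (fun δ : ℝ => δ^6) := by
    rw [Asymptotics.isBigO_iff]
    refine ⟨3, ?_⟩
    filter_upwards [hmem] with δ hδ
    have h0 : 0 < δ := hδ.1
    have h1 : δ ≤ 1/2 := hδ.2.le
    rw [hF δ ⟨h0, by linarith⟩]
    have hb := my_main2 h0 h1 (my_artanh h0 h1)
    rw [Real.norm_eq_abs, Real.norm_eq_abs, abs_of_pos (pow_pos h0 6)]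
    calc |(3:ℝ) ^ ((1:ℝ)/3) * (Real.log ((1 + δ) / Real.sqrt (1 - δ^2)) - δ) ^ ((1:ℝ)/3) / δ
          - 1 - δ^2/5 - 18/175 * δ^4|
        = |(3:ℝ) ^ ((1:ℝ)/3) * (Real.log ((1 + δ) / Real.sqrt (1 - δ^2)) - δ) ^ ((1:ℝ)/3) / δ
          - (1 + δ^2/5 + 18/175 * δ^4)| := by ring_nf
      _ ≤ 3 * δ^6 := hb
  refine ⟨hO, ?_⟩
  have h6 : Tendsto (fun δ : ℝ => δ^6) (nhdsWithin 0 (Set.Ioi 0)) (nhds 0) := by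
    have := ((continuous_pow 6).tendsto (0:ℝ)).mono_left (nhdsWithin_le_nhds (s := Set.Ioi 0))
    simpa using this
  have hd : Tendsto (fun δ : ℝ => F δ - 1 - δ^2/5 - 18/175 * δ^4)
      (nhdsWithin 0 (Set.Ioi 0)) (nhds 0) := hO.trans_tendsto h6
  have hp : Tendsto (fun δ : ℝ => 1 + δ^2/5 + 18/175 * δ^4)
      (nhdsWithin 0 (Set.Ioi 0)) (nhds 1) := by
    have : Continuous (fun δ : ℝ => 1 + δ^2/5 + 18/175 * δ^4) := by continuity
    have := (this.tendsto (0:ℝ)).mono_left (nhdsWithin_le_nhds (s := Set.Ioi 0))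
    simpa using this
  have := hd.add hp
  simp only [zero_add] at this
  convert this using 2 with δ
  ring
end
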